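/- Let G = ⟨A, R⟩ be an AF with a reinstatement labelling L. Then the set in(L) of arguments labelled 'in' is an admissible set of G. -/
import Mathlib

inductive Label where
  | IN | OUT | UNDEC
deriving DecidableEq

def conflictFree {α : Type*} (R : α → α → Prop) (E : Set α) : Prop :=
  ∀ a ∈ E, ∀ b ∈ E, ¬ R a b

def admissible {α : Type*} (R : α → α → Prop) (E : Set α) : Prop :=
  conflictFree R E ∧ ∀ x ∈ E, ∀ y, R y x → ∃ e ∈ E, R e y

/-- A reinstatement labelling: attackers of `in` arguments are `out`, and every
`out` argument has an `in` attacker. -/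
def reinstatement {α : Type*} (R : α → α → Prop) (L : α → Label) : Prop :=
  (∀ a, L a = Label.IN → ∀ b, R b a → L b = Label.OUT) ∧
  (∀ a, L a = Label.OUT → ∃ b, R b a ∧ L b = Label.IN)

/-- For a reinstatement labelling `L`, the set of `in`-labelled arguments is
admissible. -/
theorem inSet_admissible {α : Type*} (R : α → α → Prop) (L : α → Label)
    (hL : reinstatement R L) :
    admissible R {a | L a = Label.IN} := by
  obtain ⟨h1, h2⟩ := hL
  constructor
  · intro a ha b hb hab
    have := h1 b hb a hab
    simp_all
  · intro x hx y hyx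
    have hy := h1 x hx y hyx
    obtain ⟨b, hb, hbin⟩ := h2 y hy
    exact ⟨b, hbin, hb⟩
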